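/- arXiv:2605.28265 — 9 statements merged into one kernel-verified Lean document; each statement's English description precedes it below -/
import Mathlib

section
/- Let N ≥ 2 and let μ₀ be a point in the interior of the standard simplex Δ in ℝ^N (so μ₀(j) > 0 for all j and ∑ⱼ μ₀(j) = 1). Let R = (√N/√(N−1)) · minⱼ μ₀(j). Then every point p in the affine hyperplane {x ∈ ℝ^N : ∑ⱼ x(j) = 1} with ‖p − μ₀‖₂ ≤ R satisfies p(j) ≥ 0 for all j, i.e., p lies in the simplex. -/
/-- Any point of the hyperplane `∑ x j = 1` within Euclidean distance
`R = (√N/√(N-1)) · minⱼ μ₀(j)` of a full-support prior `μ₀` lies in the simplex. -/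
theorem stmt0 (N : ℕ) (hN : 2 ≤ N) (μ₀ : EuclideanSpace ℝ (Fin N))
    (hpos : ∀ j, 0 < μ₀ j) (hsum : ∑ j, μ₀ j = 1)
    (m : ℝ) (hm : ∀ j, m ≤ μ₀ j) (hm' : ∃ j, μ₀ j = m)
    (R : ℝ) (hR : R = Real.sqrt N / Real.sqrt (N - 1) * m)
    (p : EuclideanSpace ℝ (Fin N)) (hp : ∑ j, p j = 1)
    (hdist : ‖p - μ₀‖ ≤ R) :
    ∀ j, 0 ≤ p j := by
  intro j
  set v : Fin N → ℝ := fun i => p i - μ₀ i with hv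
  have hN1 : (0:ℝ) < (N:ℝ) - 1 := by
    have : (2:ℝ) ≤ N := by exact_mod_cast hN
    linarith
  have hNpos : (0:ℝ) < N := by linarith
  have hmpos : 0 < m := by
    obtain ⟨i, hi⟩ := hm'
    rw [← hi]; exact hpos i
  -- sum of v is zero
  have hsumv : ∑ i, v i = 0 := by
    simp only [hv, Finset.sum_sub_distrib, hp, hsum, sub_self]
  -- norm bound squared
  have hnorm : ‖p - μ₀‖ ^ 2 = ∑ i, v i ^ 2 := by
    rw [EuclideanSpace.norm_eq]
    rw [Real.sq_sqrt (by positivity)]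
    apply Finset.sum_congr rfl
    intro i _
    simp [hv, Real.norm_eq_abs, sq_abs]
  have hR2 : R ^ 2 = (N:ℝ) / ((N:ℝ) - 1) * m ^ 2 := by
    rw [hR, mul_pow, div_pow, Real.sq_sqrt hNpos.le, Real.sq_sqrt hN1.le]
  have hRnn : 0 ≤ R := by
    rw [hR]; positivity
  have hsq : ∑ i, v i ^ 2 ≤ (N:ℝ) / ((N:ℝ) - 1) * m ^ 2 := by
    rw [← hnorm, ← hR2]
    exact pow_le_pow_left₀ (norm_nonneg _) hdist 2
  -- Cauchy-Schwarz on the complement of j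
  have hvj : v j = -∑ i ∈ Finset.univ.erase j, v i := by
    have := Finset.add_sum_erase Finset.univ v (Finset.mem_univ j)
    rw [hsumv] at this
    linarith
  have hcs : (v j) ^ 2 ≤ ((N:ℝ) - 1) * ∑ i ∈ Finset.univ.erase j, v i ^ 2 := by
    rw [hvj, neg_pow, (by ring : (-1:ℝ)^2 = 1), one_mul]
    have := sq_sum_le_card_mul_sum_sq (s := Finset.univ.erase j) (f := v)
    have hcard : (((Finset.univ.erase j).card) : ℝ) = (N:ℝ) - 1 := by
      rw [Finset.card_erase_of_mem (Finset.mem_univ j), Finset.card_univ, Fintype.card_fin]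
      have h1 : 1 ≤ N := by omega
      push_cast [h1]
      ring
    rw [hcard] at this
    exact this
  have hsplit : ∑ i ∈ Finset.univ.erase j, v i ^ 2 = (∑ i, v i ^ 2) - v j ^ 2 := by
    have h := Finset.add_sum_erase Finset.univ (fun i => v i ^ 2) (Finset.mem_univ j)
    linarith
  have hkey : (N:ℝ) * (v j) ^ 2 ≤ ((N:ℝ) - 1) * ∑ i, v i ^ 2 := by
    rw [hsplit] at hcs
    nlinarith
  have hkey2 : (v j) ^ 2 ≤ m ^ 2 := by
    have h1 : ((N:ℝ) - 1) * ((N:ℝ) / ((N:ℝ) - 1) * m ^ 2) = (N:ℝ) * m ^ 2 := by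
      field_simp
    nlinarith [mul_le_mul_of_nonneg_left hsq (le_of_lt hN1)]
  have habs : -m ≤ v j := by
    nlinarith [sq_nonneg (v j + m)]
  have hpj : p j = μ₀ j + v j := by simp [hv]
  linarith [hm j]
end

section
/- Let N ≥ 2, let μ₀ be in the interior of the standard simplex Δ ⊂ ℝ^N, and let R = (√N/√(N−1)) · minⱼ μ₀(j). Then R is maximal: for every R' > R there exists a point p in the hyperplane {x : ∑ⱼ x(j) = 1} with ‖p − μ₀‖₂ = R' and p ∉ Δ (some coordinate of p is negative). -/
/-!
Move from `μ₀` along the hyperplane in the direction that lowers a minimal coordinate `j` fastest,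
namely the projection of `-eⱼ` onto `{∑ x = 0}`, which has length `√(N-1)/√N`. A step of length
`R'` lowers `μ₀ j = m` by `R' √(N-1)/√N`, and this exceeds `m` exactly when `R' > R`.
-/

open Finset

namespace EuclideanSpace

variable {ι : Type*} [Fintype ι] [DecidableEq ι]

/-- The orthogonal projection of `-single i 1` onto the hyperplane `∑ j, x j = 0`. -/
noncomputable def negProjSingle (i : ι) : EuclideanSpace ℝ ι :=
  WithLp.toLp 2 fun j => (Fintype.card ι : ℝ)⁻¹ - if j = i then 1 else 0

theorem negProjSingle_apply (i j : ι) :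
    negProjSingle i j = (Fintype.card ι : ℝ)⁻¹ - if j = i then 1 else 0 := rfl

theorem sum_negProjSingle (i : ι) : ∑ j, negProjSingle i j = 0 := by
  simp only [negProjSingle_apply, sum_sub_distrib, sum_const, card_univ, nsmul_eq_mul,
    sum_ite_eq', mem_univ, if_true]
  have : Nonempty ι := ⟨i⟩
  rw [mul_inv_cancel₀ (Nat.cast_ne_zero.mpr Fintype.card_ne_zero), sub_self]

theorem norm_negProjSingle (i : ι) :
    ‖negProjSingle i‖ = √((Fintype.card ι : ℝ) - 1) / √(Fintype.card ι) := by
  have : Nonempty ι := ⟨i⟩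
  have hn : (Fintype.card ι : ℝ) ≠ 0 := Nat.cast_ne_zero.mpr Fintype.card_ne_zero
  have hsq : ∀ j, ‖negProjSingle i j‖ ^ 2 =
      (Fintype.card ι : ℝ)⁻¹ ^ 2 + (1 - 2 * (Fintype.card ι : ℝ)⁻¹) * if j = i then 1 else 0 := by
    intro j
    rw [Real.norm_eq_abs, sq_abs, negProjSingle_apply]
    split_ifs <;> ring
  rw [EuclideanSpace.norm_eq, ← Real.sqrt_div' _ (Nat.cast_nonneg _)]
  congr 1
  simp only [hsq, sum_add_distrib, ← mul_sum, sum_const, card_univ, nsmul_eq_mul,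
    sum_ite_eq', mem_univ, if_true]
  field_simp
  ring

theorem exists_sum_eq_norm_sub_eq_apply_eq (x : EuclideanSpace ℝ ι) (i : ι)
    (hcard : 1 < Fintype.card ι) {r : ℝ} (hr : 0 ≤ r) :
    ∃ p : EuclideanSpace ℝ ι, ∑ j, p j = ∑ j, x j ∧ ‖p - x‖ = r ∧
      p i = x i - r * (√((Fintype.card ι : ℝ) - 1) / √(Fintype.card ι)) := by
  set n : ℝ := (Fintype.card ι : ℝ) with hn_def
  have hn : 1 < n := by rw [hn_def]; exact_mod_cast hcard
  set k : ℝ := √(n - 1) / √n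
  have hk : 0 < k := by
    have : 0 < n - 1 := by linarith
    positivity
  have hk_sq : k ^ 2 = 1 - n⁻¹ := by
    rw [div_pow, Real.sq_sqrt (by linarith), Real.sq_sqrt (by linarith)]
    field_simp
  refine ⟨x + (r / k) • negProjSingle i, ?_, ?_, ?_⟩
  · simp only [PiLp.add_apply, PiLp.smul_apply, smul_eq_mul, sum_add_distrib, ← mul_sum,
      sum_negProjSingle, mul_zero, add_zero]
  · rw [add_sub_cancel_left, norm_smul, norm_negProjSingle, Real.norm_of_nonneg (by positivity),
      div_mul_cancel₀ _ hk.ne']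
  · have hi : negProjSingle i i = -k ^ 2 := by
      rw [negProjSingle_apply, if_pos rfl, hk_sq]
      ring
    rw [PiLp.add_apply, PiLp.smul_apply, smul_eq_mul, hi]
    field_simp
    ring

end EuclideanSpace

theorem stmt1_general (N : ℕ) (hN : 2 ≤ N) (μ₀ : EuclideanSpace ℝ (Fin N))
    (hpos : ∀ j, 0 < μ₀ j) (hsum : ∑ j, μ₀ j = 1)
    (m : ℝ) (hm' : ∃ j, μ₀ j = m)
    (R : ℝ) (hR : R = Real.sqrt N / Real.sqrt (N - 1) * m)
    (R' : ℝ) (hR' : R < R') :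
    ∃ p : EuclideanSpace ℝ (Fin N), (∑ j, p j = 1) ∧ ‖p - μ₀‖ = R' ∧ ∃ j, p j < 0 := by
  obtain ⟨j, rfl⟩ := hm'
  have hN1 : (0 : ℝ) < N - 1 := by
    have : (2 : ℝ) ≤ N := by exact_mod_cast hN
    linarith
  have hk : 0 < √(N - 1 : ℝ) / √N := by positivity
  have hR_pos : 0 < R := by rw [hR]; have := hpos j; positivity
  have hcard : 1 < Fintype.card (Fin N) := by rw [Fintype.card_fin]; omega
  obtain ⟨p, hp_sum, hp_norm, hp_j⟩ :=
    EuclideanSpace.exists_sum_eq_norm_sub_eq_apply_eq μ₀ j hcard (hR_pos.trans hR').le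
  refine ⟨p, hp_sum.trans hsum, hp_norm, j, ?_⟩
  rw [hp_j, Fintype.card_fin, sub_neg, mul_comm]
  rwa [hR, ← inv_div, inv_mul_lt_iff₀ hk] at hR'

/-- Sharpness of the inradius `R = (√N/√(N-1)) · minⱼ μ₀(j)`: for any radius `R' > R`
there is a point of the hyperplane at distance exactly `R'` from `μ₀` outside the simplex. -/
theorem stmt1 (N : ℕ) (hN : 2 ≤ N) (μ₀ : EuclideanSpace ℝ (Fin N))
    (hpos : ∀ j, 0 < μ₀ j) (hsum : ∑ j, μ₀ j = 1)
    (m : ℝ) (hm : ∀ j, m ≤ μ₀ j) (hm' : ∃ j, μ₀ j = m)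
    (R : ℝ) (hR : R = Real.sqrt N / Real.sqrt (N - 1) * m)
    (R' : ℝ) (hR' : R < R') :
    ∃ p : EuclideanSpace ℝ (Fin N), (∑ j, p j = 1) ∧ ‖p - μ₀‖ = R' ∧ ∃ j, p j < 0 :=
  stmt1_general N hN μ₀ hpos hsum m hm' R hR R' hR'
end

section
/- Let μ₀ be a full-support point of the simplex Δ ⊂ ℝ^N and R = (√N/√(N−1)) · minⱼ μ₀(j). Let {αᵢ}_{i≤I} be positive weights summing to 1 and {μᵢ'}_{i≤I} ⊂ Δ arbitrary posteriors. Set r = ∑ᵢ αᵢ μᵢ' − μ₀ and, if r ≠ 0, μ_corr = μ₀ − (R/‖r‖₂)·r. Then μ_corr ∈ Δ, and the collection consisting of posteriors {μᵢ'} with weights (R/(R+‖r‖₂))·αᵢ together with μ_corr with weight ‖r‖₂/(R+‖r‖₂) forms a valid splitting of μ₀: the weights are nonnegative, sum to 1, and the weighted average of the posteriors equals μ₀. -/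
/-!
A vector `v` with coordinate sum zero satisfies `√N |v j| ≤ √(N - 1) ‖v‖` (Cauchy–Schwarz on the
other `N - 1` coordinates, which sum to `-v j`). Hence every point of the hyperplane `∑ x j = 1`
within distance `R = √N / √(N - 1) · min μ₀` of `μ₀` has nonnegative coordinates. The correcting
posterior `μ₀ - (R / ‖r‖) r` lies at distance exactly `R`, and the weights `R : ‖r‖` are chosen
so that its drift `-R r / ‖r‖` cancels the drift `r` of the original splitting.
-/

open Finset

namespace EuclideanSpace

variable {ι : Type*} [Fintype ι]

theorem card_mul_sq_le_of_sum_eq_zero {v : EuclideanSpace ℝ ι} (hv : ∑ k, v k = 0) (j : ι) :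
    Fintype.card ι * v j ^ 2 ≤ (Fintype.card ι - 1) * ‖v‖ ^ 2 := by
  classical
  have hrest : ∑ k ∈ univ.erase j, v k = -v j := by
    linarith [add_sum_erase univ (fun k => v k) (mem_univ j)]
  have hnorm : ‖v‖ ^ 2 = v j ^ 2 + ∑ k ∈ univ.erase j, v k ^ 2 := by
    rw [real_norm_sq_eq, add_sum_erase univ (fun k => v k ^ 2) (mem_univ j)]
  have hcs := sq_sum_le_card_mul_sum_sq (s := univ.erase j) (f := fun k => v k)
  rw [hrest, card_erase_of_mem (mem_univ j), card_univ,
    Nat.cast_pred (Fintype.card_pos_iff.2 ⟨j⟩), neg_sq] at hcs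
  rw [hnorm]
  linarith

theorem sqrt_card_mul_le_of_sum_eq_zero {v : EuclideanSpace ℝ ι} (hv : ∑ k, v k = 0) (j : ι) :
    √(Fintype.card ι) * |v j| ≤ √(Fintype.card ι - 1) * ‖v‖ := by
  rw [← Real.sqrt_sq_eq_abs, ← Real.sqrt_mul (Nat.cast_nonneg _), ← Real.sqrt_sq (norm_nonneg v),
    ← Real.sqrt_mul' _ (sq_nonneg _)]
  exact Real.sqrt_le_sqrt (card_mul_sq_le_of_sum_eq_zero hv j)

theorem nonneg_of_norm_sub_le (hι : 1 < Fintype.card ι) {x y : EuclideanSpace ℝ ι} {m : ℝ}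
    (hm : ∀ k, m ≤ x k) (hsum : ∑ k, y k = ∑ k, x k)
    (hdist : ‖y - x‖ ≤ √(Fintype.card ι) / √(Fintype.card ι - 1) * m) (j : ι) : 0 ≤ y j := by
  have hv : ∑ k, (y - x) k = 0 := by simp [hsum]
  have hN : 0 < √(Fintype.card ι : ℝ) := Real.sqrt_pos.2 (by positivity)
  have hN1 : 0 < √(Fintype.card ι - 1 : ℝ) := Real.sqrt_pos.2 (by
    have : (1 : ℝ) < Fintype.card ι := by exact_mod_cast hι
    linarith)
  have hcoord := sqrt_card_mul_le_of_sum_eq_zero hv j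
  have hdist' : √(Fintype.card ι - 1) * ‖y - x‖ ≤ √(Fintype.card ι) * m := by
    calc _ ≤ √(Fintype.card ι - 1) * (√(Fintype.card ι) / √(Fintype.card ι - 1) * m) :=
          mul_le_mul_of_nonneg_left hdist hN1.le
      _ = _ := by field_simp
  have habs : |(y - x) j| ≤ m := le_of_mul_le_mul_left (hcoord.trans hdist') hN
  have hneg := neg_abs_le ((y - x) j)
  simp only [PiLp.sub_apply] at hneg habs
  linarith [hm j]

end EuclideanSpace

theorem smul_add_smul_sub_smul_eq {𝕜 E : Type*} [Field 𝕜] [AddCommGroup E] [Module 𝕜 E]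
    {a b : 𝕜} (hab : a + b ≠ 0) (hb : b ≠ 0) (μ r : E) :
    (a / (a + b)) • (μ + r) + (b / (a + b)) • (μ - (a / b) • r) = μ := by
  match_scalars
  · field_simp
  · field_simp
    ring

/-- The adjustment construction: the correcting posterior `μ_corr` lies in the simplex and,
together with the rescaled weights, yields a valid splitting of the prior `μ₀`. -/
theorem stmt2 (N I : ℕ) (hN : 2 ≤ N) (μ₀ : EuclideanSpace ℝ (Fin N))
    (hpos : ∀ j, 0 < μ₀ j) (hsum : ∑ j, μ₀ j = 1)
    (m : ℝ) (hm : ∀ j, m ≤ μ₀ j) (hm' : ∃ j, μ₀ j = m)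
    (R : ℝ) (hR : R = Real.sqrt N / Real.sqrt (N - 1) * m)
    (α : Fin I → ℝ) (hα : ∀ i, 0 < α i) (hαsum : ∑ i, α i = 1)
    (μ' : Fin I → EuclideanSpace ℝ (Fin N))
    (hμ' : ∀ i, (∀ j, 0 ≤ μ' i j) ∧ ∑ j, μ' i j = 1)
    (r : EuclideanSpace ℝ (Fin N)) (hr : r = ∑ i, α i • μ' i - μ₀) (hr0 : r ≠ 0)
    (μc : EuclideanSpace ℝ (Fin N)) (hμc : μc = μ₀ - (R / ‖r‖) • r) :
    ((∀ j, 0 ≤ μc j) ∧ ∑ j, μc j = 1) ∧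
    (∀ i, 0 ≤ R / (R + ‖r‖) * α i) ∧ 0 ≤ ‖r‖ / (R + ‖r‖) ∧
    (∑ i, R / (R + ‖r‖) * α i) + ‖r‖ / (R + ‖r‖) = 1 ∧
    (∑ i, (R / (R + ‖r‖) * α i) • μ' i) + (‖r‖ / (R + ‖r‖)) • μc = μ₀ := by
  have hR0 : 0 ≤ R := by
    obtain ⟨j, rfl⟩ := hm'
    rw [hR]
    have := hpos j
    positivity
  have hr_pos : 0 < ‖r‖ := norm_pos_iff.2 hr0
  have hr_sum : ∑ j, r j = 0 := by
    simp only [hr, PiLp.sub_apply, WithLp.ofLp_sum, Finset.sum_apply, PiLp.smul_apply, smul_eq_mul,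
      sum_sub_distrib, hsum]
    rw [sum_comm]
    simp [← mul_sum, (hμ' _).2, hαsum]
  have hμc_sum : ∑ j, μc j = 1 := by
    simp [hμc, sum_sub_distrib, ← mul_sum, hr_sum, hsum]
  have hμc_dist : ‖μc - μ₀‖ ≤ R := by
    rw [hμc, sub_sub_cancel_left, norm_neg, norm_smul, Real.norm_of_nonneg (by positivity),
      div_mul_cancel₀ _ hr_pos.ne']
  have hcard : 1 < Fintype.card (Fin N) := by rw [Fintype.card_fin]; omega
  refine ⟨⟨EuclideanSpace.nonneg_of_norm_sub_le hcard hm (by rw [hμc_sum, hsum]) ?_, hμc_sum⟩,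
    fun i => by have := hα i; positivity, by positivity, ?_, ?_⟩
  · simpa [← hR] using hμc_dist
  · rw [← mul_sum, hαsum]
    field_simp
  · simp only [mul_smul, ← smul_sum, eq_add_of_sub_eq' hr.symm, hμc]
    exact smul_add_smul_sub_smul_eq (by positivity) hr_pos.ne' μ₀ r
end

section
/- Let D = {x ∈ ℝⁿ : x(j) ≥ 0, ∑ⱼ x(j) ≤ 1} and B = {x ∈ D : ⟨αᵢ, x⟩ ≤ βᵢ, i ≤ m}. Suppose B has an interior-type point: there exist p₀ ∈ D and C > 0 with p₀(j) > C for all j, ∑ⱼ p₀(j) < 1 − C, and ⟨αᵢ, p₀⟩ < βᵢ − C for all i. Then for every γ > 0 there exists δ₀ > 0 such that for all 0 < δ < δ₀, the contracted set Aff(B, −δ) = {x ∈ D : ⟨αᵢ, x⟩ ≤ βᵢ − δ} is nonempty and every point of B is within Euclidean distance γ of Aff(B, −δ). -/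
/-- Stability of contracted systems: if the feasible region has an interior point with
uniform slack `C`, then for small `δ > 0` the `δ`-tightened region is nonempty and every
feasible point is within `γ` of it. -/
theorem stmt7 (n m : ℕ) (α : Fin m → EuclideanSpace ℝ (Fin n)) (β : Fin m → ℝ)
    (D : Set (EuclideanSpace ℝ (Fin n)))
    (hD : D = {x | (∀ j, 0 ≤ x j) ∧ ∑ j, x j ≤ 1})
    (p₀ : EuclideanSpace ℝ (Fin n)) (C : ℝ) (hC : 0 < C)
    (hp₀pos : ∀ j, C < p₀ j) (hp₀sum : ∑ j, p₀ j < 1 - C)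
    (hp₀in : ∀ i, ∑ j, α i j * p₀ j < β i - C) :
    ∀ γ > (0:ℝ), ∃ δ₀ > (0:ℝ), ∀ δ : ℝ, 0 < δ → δ < δ₀ →
      ({x ∈ D | ∀ i, ∑ j, α i j * x j ≤ β i - δ}.Nonempty ∧
       ∀ p ∈ {x ∈ D | ∀ i, ∑ j, α i j * x j ≤ β i},
         ∃ q ∈ {x ∈ D | ∀ i, ∑ j, α i j * x j ≤ β i - δ}, ‖p - q‖ ≤ γ) := by
  intro γ hγ
  set t : ℝ := min 1 (γ / 2) with ht_def
  have ht0 : 0 < t := lt_min one_pos (by linarith)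
  have ht1 : t ≤ 1 := min_le_left _ _
  have htγ : t ≤ γ / 2 := min_le_right _ _
  refine ⟨t * C, mul_pos ht0 hC, ?_⟩
  intro δ hδ0 hδ1
  have hδC : δ < C := lt_of_lt_of_le hδ1 (by nlinarith)
  -- points of D have norm at most 1
  have normD : ∀ x : EuclideanSpace ℝ (Fin n), x ∈ D → ‖x‖ ≤ 1 := by
    intro x hx
    rw [hD] at hx
    obtain ⟨hx0, hx1⟩ := hx
    have hle : ∀ j, x j ≤ 1 := by
      intro j
      have := Finset.single_le_sum (f := fun j => x j) (fun i _ => hx0 i)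
        (Finset.mem_univ j)
      linarith
    rw [EuclideanSpace.norm_eq]
    rw [show (1:ℝ) = Real.sqrt 1 from Real.sqrt_one.symm]
    apply Real.sqrt_le_sqrt
    calc ∑ j, ‖x j‖ ^ 2 ≤ ∑ j, x j := by
          apply Finset.sum_le_sum
          intro j _
          rw [Real.norm_eq_abs, sq_abs]
          nlinarith [hx0 j, hle j]
      _ ≤ 1 := hx1
  have hp₀D : p₀ ∈ D := by
    rw [hD]
    exact ⟨fun j => le_of_lt (lt_trans hC (hp₀pos j)), by linarith⟩
  constructor
  · exact ⟨p₀, hp₀D, fun i => by linarith [hp₀in i]⟩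
  · intro p hp
    obtain ⟨hpD, hpB⟩ := hp
    have hpD' := hpD
    rw [hD] at hpD'
    obtain ⟨hp0, hp1⟩ := hpD'
    refine ⟨p + t • (p₀ - p), ⟨?_, ?_⟩, ?_⟩
    · -- membership in D and constraints with slack δ
      rw [hD]
      have happ : ∀ j, (p + t • (p₀ - p)) j = p j + t * (p₀ j - p j) := by
        intro j; simp [PiLp.add_apply, PiLp.smul_apply, PiLp.sub_apply]
      constructor
      · intro j
        rw [happ j]
        nlinarith [hp0 j, hp₀pos j]
      · have hsum : ∑ j, (p + t • (p₀ - p)) j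
            = ∑ j, p j + t * (∑ j, p₀ j - ∑ j, p j) := by
          simp only [happ, mul_sub]
          rw [Finset.sum_add_distrib, Finset.sum_sub_distrib, ← Finset.mul_sum,
            ← Finset.mul_sum]
        rw [hsum]
        nlinarith
    · intro i
      have happ : ∀ j, α i j * (p + t • (p₀ - p)) j
          = α i j * p j + t * (α i j * p₀ j - α i j * p j) := by
        intro j; simp [PiLp.add_apply, PiLp.smul_apply, PiLp.sub_apply]; ring
      have hsum : ∑ j, α i j * (p + t • (p₀ - p)) j
          = ∑ j, α i j * p j + t * (∑ j, α i j * p₀ j - ∑ j, α i j * p j) := by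
        simp only [happ]
        rw [Finset.sum_add_distrib, ← Finset.mul_sum, Finset.sum_sub_distrib]
      rw [hsum]
      nlinarith [hpB i, hp₀in i]
    · have heq : p - (p + t • (p₀ - p)) = t • (p - p₀) := by
        rw [smul_sub, smul_sub]; abel
      rw [heq, norm_smul]
      have hnorm : ‖p - p₀‖ ≤ 2 := by
        calc ‖p - p₀‖ ≤ ‖p‖ + ‖p₀‖ := norm_sub_le _ _
          _ ≤ 2 := by linarith [normD p hpD, normD p₀ hp₀D]
      have : ‖t‖ = t := by rw [Real.norm_eq_abs, abs_of_pos ht0]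
      rw [this]
      nlinarith
end

section
/- Let P = {x ∈ ℝⁿ : Cx ≤ d} be a nonempty bounded polyhedron with dim(P) = k < n, defined by finitely many linear inequalities. Then the subsystem C⁼x ≤ d⁼ of implicit equalities (those inequalities that hold with equality on all of P) satisfies rank(C⁼) = n − k and contains at least n − k + 1 inequalities; in particular, the rows of the implicit-equality subsystem are linearly dependent. -/
/-!
Averaging, for each inequality that is not an implicit equality, a point of `P` where it is
strict gives a point `x₀ ∈ P` where only the implicit equalities are tight; from `x₀` one can
take a small step in any direction `y` with `⟪c i, y⟫ ≤ 0` for the implicit rows `c i`. Hence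
the affine hull of `P` is parallel to the orthogonal complement of the implicit rows, which gives
their rank `n - k > 0`. If the implicit rows were independent, some `y` would satisfy
`⟪c i, y⟫ = -1` for all of them, and a small step from `x₀` along `y` would stay in `P` while
breaking the implicit equalities. So they are dependent, and there are more than `n - k` of them.
-/

open Filter Topology Module Submodule
open scoped RealInnerProductSpace

section Polyhedron

variable {V : Type*} [NormedAddCommGroup V] [InnerProductSpace ℝ V] {ι : Type*}

def polyhedron (c : ι → V) (d : ι → ℝ) : Set V := {x | ∀ i, ⟪c i, x⟫ ≤ d i}

def implicitEqualities (c : ι → V) (d : ι → ℝ) : Set ι :=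
  {i | ∀ x ∈ polyhedron c d, ⟪c i, x⟫ = d i}

variable {c : ι → V} {d : ι → ℝ}

theorem exists_mem_polyhedron_inner_lt_off_implicitEqualities [Fintype ι]
    (hne : (polyhedron c d).Nonempty) :
    ∃ x₀ ∈ polyhedron c d, ∀ i ∉ implicitEqualities c d, ⟪c i, x₀⟫ < d i := by
  have hwit : ∀ i, ∃ x ∈ polyhedron c d, i ∉ implicitEqualities c d → ⟪c i, x⟫ < d i := by
    intro i
    by_cases hi : i ∈ implicitEqualities c d
    · exact ⟨hne.some, hne.some_mem, absurd hi⟩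
    · simp only [implicitEqualities, Set.mem_ofPred_eq, not_forall] at hi
      obtain ⟨x, hx, hxi⟩ := hi
      exact ⟨x, hx, fun _ => (hx i).lt_of_ne hxi⟩
  choose z hzP hzlt using hwit
  have hmean : ∀ i, ⟪c i, (Fintype.card ι : ℝ)⁻¹ • ∑ j, z j⟫
      = (Fintype.card ι : ℝ)⁻¹ * ∑ j, ⟪c i, z j⟫ := fun i => by
    rw [real_inner_smul_right, inner_sum]
  have hcard : ∀ i : ι, (0 : ℝ) < Fintype.card ι := fun i =>
    Nat.cast_pos.2 (Fintype.card_pos_iff.2 ⟨i⟩)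
  refine ⟨(Fintype.card ι : ℝ)⁻¹ • ∑ j, z j, fun i => ?_, fun i hi => ?_⟩
  · rw [hmean, inv_mul_le_iff₀ (hcard i)]
    exact (Finset.sum_le_sum fun j _ => hzP j i).trans_eq (by simp)
  · rw [hmean, inv_mul_lt_iff₀ (hcard i)]
    exact (Finset.sum_lt_sum (fun j _ => hzP j i) ⟨i, Finset.mem_univ i, hzlt i hi⟩).trans_eq
      (by simp)

theorem exists_pos_add_smul_mem_polyhedron [Finite ι] {x₀ y : V} (hx₀ : x₀ ∈ polyhedron c d)
    (hstrict : ∀ i ∉ implicitEqualities c d, ⟪c i, x₀⟫ < d i)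
    (hy : ∀ i ∈ implicitEqualities c d, ⟪c i, y⟫ ≤ 0) :
    ∃ t : ℝ, 0 < t ∧ x₀ + t • y ∈ polyhedron c d := by
  suffices h : ∀ᶠ t in 𝓝[>] (0 : ℝ), x₀ + t • y ∈ polyhedron c d from
    (h.and self_mem_nhdsWithin).exists.imp fun _ ht => ⟨ht.2, ht.1⟩
  simp only [polyhedron, Set.mem_ofPred_eq, inner_add_right, real_inner_smul_right]
  refine eventually_all.2 fun i => ?_
  by_cases hi : i ∈ implicitEqualities c d
  · filter_upwards [self_mem_nhdsWithin] with t (ht : 0 < t)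
    nlinarith [hx₀ i, hy i hi]
  · have hlim : Tendsto (fun t : ℝ => ⟪c i, x₀⟫ + t * ⟪c i, y⟫) (𝓝[>] 0) (𝓝 ⟪c i, x₀⟫) := by
      refine tendsto_nhdsWithin_of_tendsto_nhds ?_
      simpa using ((continuous_id.mul continuous_const).const_add _).tendsto (0 : ℝ)
    exact (hlim.eventually_lt_const (hstrict i hi)).mono fun _ => le_of_lt

theorem vectorSpan_polyhedron [Fintype ι] (hne : (polyhedron c d).Nonempty) :
    vectorSpan ℝ (polyhedron c d) = (span ℝ (c '' implicitEqualities c d))ᗮ := by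
  apply le_antisymm
  · rw [vectorSpan_def, ← isOrtho_iff_le, isOrtho_span]
    rintro _ ⟨p, hp, q, hq, rfl⟩ _ ⟨i, hi, rfl⟩
    simp only [vsub_eq_sub]
    rw [inner_sub_left, real_inner_comm, hi p hp, real_inner_comm, hi q hq, sub_self]
  · intro y hy
    obtain ⟨x₀, hx₀, hstrict⟩ := exists_mem_polyhedron_inner_lt_off_implicitEqualities hne
    have hyE : ∀ i ∈ implicitEqualities c d, ⟪c i, y⟫ ≤ 0 := fun i hi =>
      (inner_right_of_mem_orthogonal (subset_span (Set.mem_image_of_mem c hi)) hy).le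
    obtain ⟨t, ht, htP⟩ := exists_pos_add_smul_mem_polyhedron hx₀ hstrict hyE
    have hty : t • y ∈ vectorSpan ℝ (polyhedron c d) := by
      simpa using vsub_mem_vectorSpan ℝ htP hx₀
    exact (smul_mem_iff _ (ne_of_gt ht)).1 hty

theorem finrank_span_implicitEqualities_add_finrank_vectorSpan [Fintype ι]
    [FiniteDimensional ℝ V] (hne : (polyhedron c d).Nonempty) :
    finrank ℝ (span ℝ (c '' implicitEqualities c d)) + finrank ℝ (vectorSpan ℝ (polyhedron c d))
      = finrank ℝ V := by
  rw [vectorSpan_polyhedron hne, finrank_add_finrank_orthogonal]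

theorem exists_inner_eq_of_linearIndependent [Finite ι] {v : ι → V} (hv : LinearIndependent ℝ v)
    (a : ι → ℝ) : ∃ y : V, ∀ i, ⟪v i, y⟫ = a i := by
  have := FiniteDimensional.span_of_finite ℝ (Set.finite_range v)
  let b := Basis.span hv
  refine ⟨(InnerProductSpace.toDual ℝ (span ℝ (Set.range v))).symm
    (b.constr ℝ a).toContinuousLinearMap, fun i => ?_⟩
  have hbi : (b i : V) = v i := congrArg Subtype.val (Basis.span_apply hv i)
  rw [real_inner_comm, ← hbi, ← coe_inner, InnerProductSpace.toDual_symm_apply]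
  exact b.constr_basis ℝ a i

theorem not_linearIndependent_implicitEqualities [Fintype ι] (hne : (polyhedron c d).Nonempty)
    (hE : (implicitEqualities c d).Nonempty) :
    ¬ LinearIndependent ℝ (fun i : implicitEqualities c d => c i) := by
  intro hind
  obtain ⟨i₀, hi₀⟩ := hE
  obtain ⟨y, hy⟩ := exists_inner_eq_of_linearIndependent hind fun _ => -1
  obtain ⟨x₀, hx₀, hstrict⟩ := exists_mem_polyhedron_inner_lt_off_implicitEqualities hne
  obtain ⟨t, ht, htP⟩ := exists_pos_add_smul_mem_polyhedron hx₀ hstrict fun i hi => by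
    rw [hy ⟨i, hi⟩]; norm_num
  have h := hi₀ _ htP
  rw [inner_add_right, real_inner_smul_right, hy ⟨i₀, hi₀⟩, hi₀ x₀ hx₀] at h
  linarith

end Polyhedron

theorem EuclideanSpace.sum_mul_eq_inner {n : ℕ} (c x : EuclideanSpace ℝ (Fin n)) :
    ∑ j, c j * x j = ⟪c, x⟫ := by
  simp [PiLp.inner_apply, mul_comm]

theorem stmt8_general (n m : ℕ) (C : Fin m → EuclideanSpace ℝ (Fin n)) (d : Fin m → ℝ)
    (P : Set (EuclideanSpace ℝ (Fin n)))
    (hP : P = {x | ∀ i, ∑ j, C i j * x j ≤ d i})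
    (hne : P.Nonempty)
    (k : ℕ) (hk : k = Module.finrank ℝ (vectorSpan ℝ P)) (hkn : k < n)
    (E : Set (Fin m)) (hE : E = {i | ∀ x ∈ P, ∑ j, C i j * x j = d i}) :
    Module.finrank ℝ (Submodule.span ℝ (C '' E)) = n - k ∧
    n - k + 1 ≤ E.ncard ∧
    ¬ LinearIndependent ℝ (fun i : E => C i.1) := by
  classical
  simp only [EuclideanSpace.sum_mul_eq_inner] at hP hE
  obtain rfl : P = polyhedron C d := hP
  replace hE : E = implicitEqualities C d := hE
  have hrank : finrank ℝ (span ℝ (C '' E)) = n - k := by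
    have := finrank_span_implicitEqualities_add_finrank_vectorSpan hne
    rw [← hE, ← hk, finrank_euclideanSpace_fin] at this
    omega
  have hEne : E.Nonempty := by
    rw [Set.nonempty_iff_ne_empty]
    intro hempty
    rw [hempty, Set.image_empty, span_empty, finrank_bot] at hrank
    omega
  have hdep : ¬ LinearIndependent ℝ (fun i : E => C i) := by
    subst hE
    exact not_linearIndependent_implicitEqualities hne hEne
  have hlt : finrank ℝ (span ℝ (C '' E)) < E.ncard := by
    rw [Set.image_eq_range, ← Nat.card_coe_set_eq, Nat.card_eq_fintype_card]
    exact (finrank_range_le_card _).lt_of_ne fun h =>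
      hdep (linearIndependent_iff_card_eq_finrank_span.2 h.symm)
  exact ⟨hrank, by omega, hdep⟩

/-- For a nonempty bounded polyhedron `P` of dimension `k < n`, the implicit-equality
subsystem has rank `n - k` and at least `n - k + 1` members; its rows are linearly dependent. -/
theorem stmt8 (n m : ℕ) (C : Fin m → EuclideanSpace ℝ (Fin n)) (d : Fin m → ℝ)
    (P : Set (EuclideanSpace ℝ (Fin n)))
    (hP : P = {x | ∀ i, ∑ j, C i j * x j ≤ d i})
    (hne : P.Nonempty) (hbd : Bornology.IsBounded P)
    (k : ℕ) (hk : k = Module.finrank ℝ (vectorSpan ℝ P)) (hkn : k < n)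
    (E : Set (Fin m)) (hE : E = {i | ∀ x ∈ P, ∑ j, C i j * x j = d i}) :
    Module.finrank ℝ (Submodule.span ℝ (C '' E)) = n - k ∧
    n - k + 1 ≤ E.ncard ∧
    ¬ LinearIndependent ℝ (fun i : E => C i.1) :=
  stmt8_general n m C d P hP hne k hk hkn E hE
end

section
/- Fix a finite state space Ω of size N, a finite action set A, and a receiver utility u : A × Ω → ℝ. For an action a, let B(a) = {μ ∈ Δ(Ω) : ∑_ω μ(ω)u(a,ω) ≥ ∑_ω μ(ω)u(b,ω) for all b ∈ A} be the set of beliefs at which a is a best reply. If B(a) is nonempty and dim(B(a)) < N − 1, then there exists an action b ≠ a such that B(a) ⊆ B(b). -/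
/-!
If `B a ⊄ B b` for every `b ≠ a`, each such `b` does strictly worse than `a` at some belief in
`B a`. Since `B a` is convex and payoffs are linear, suitable averages of these beliefs give one
belief in `B a` at which `a` is the strict best reply. Strict inequalities persist nearby, so `B a`
contains a small homothetic copy of the vertices of the simplex; these `N` points are affinely
independent, so `dim B a ≥ N - 1`.
-/

open Filter Topology Module AffineMap

theorem exists_mem_forall_neg_of_convexOn {E ι : Type*} [AddCommGroup E] [Module ℝ E] [Finite ι]
    {C : Set E} (hC : C.Nonempty) {f : ι → E → ℝ} (hf : ∀ i, ConvexOn ℝ C (f i))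
    (hle : ∀ i, ∀ x ∈ C, f i x ≤ 0) (hlt : ∀ i, ∃ x ∈ C, f i x < 0) :
    ∃ x ∈ C, ∀ i, f i x < 0 := by
  classical
  have := Fintype.ofFinite ι
  suffices ∀ s : Finset ι, ∃ x ∈ C, ∀ i ∈ s, f i x < 0 by
    simpa using this Finset.univ
  intro s
  induction s using Finset.induction_on with
  | empty => exact ⟨hC.some, hC.some_mem, by simp⟩
  | insert j s _ ih =>
    obtain ⟨x, hxC, hx⟩ := ih
    obtain ⟨y, hyC, hy⟩ := hlt j
    have hmid : ∀ i, f i ((1 / 2 : ℝ) • x + (1 / 2 : ℝ) • y) ≤ (f i x + f i y) / 2 :=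
      fun i => by
        have := (hf i).2 hxC hyC (by norm_num) (by norm_num) (add_halves (1 : ℝ))
        simp only [smul_eq_mul] at this
        linarith
    refine ⟨_, (hf j).1 hxC hyC (by norm_num) (by norm_num) (add_halves 1), ?_⟩
    rintro i hi
    rcases Finset.mem_insert.1 hi with rfl | hi
    · linarith [hmid i, hle i x hxC]
    · linarith [hmid i, hx i hi, hle i y hyC]

theorem eventually_forall_lineMap_mem {E ι : Type*} [AddCommGroup E] [Module ℝ E]
    [TopologicalSpace E] [IsTopologicalAddGroup E] [ContinuousSMul ℝ E] [Finite ι]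
    {U : Set E} (hU : IsOpen U) {x : E} (hx : x ∈ U) (p : ι → E) :
    ∀ᶠ t in 𝓝 (0 : ℝ), ∀ i, lineMap x (p i) t ∈ U :=
  eventually_all.2 fun i =>
    lineMap_continuous.tendsto' 0 x (lineMap_apply_zero x (p i)) |>.eventually_mem
      (hU.mem_nhds hx)

theorem AffineIndependent.le_finrank_vectorSpan_of_forall_mem {k V P ι : Type*}
    [DivisionRing k] [AddCommGroup V] [Module k V] [AddTorsor V P] [FiniteDimensional k V]
    [Fintype ι]
    {p : ι → P} (hp : AffineIndependent k p) {n : ℕ} (hc : Fintype.card ι = n + 1) {s : Set P}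
    (hs : ∀ i, p i ∈ s) : n ≤ finrank k (vectorSpan k s) :=
  hp.finrank_vectorSpan hc ▸
    Submodule.finrank_mono (vectorSpan_mono k (Set.range_subset_iff.2 hs))

section BestReply

variable {Ω A : Type*} [Fintype Ω]

def beliefSimplex (Ω : Type*) [Fintype Ω] : Set (EuclideanSpace ℝ Ω) :=
  WithLp.ofLp ⁻¹' stdSimplex ℝ Ω

theorem convex_beliefSimplex : Convex ℝ (beliefSimplex Ω) :=
  (convex_stdSimplex ℝ Ω).linear_preimage (WithLp.linearEquiv 2 ℝ (Ω → ℝ)).toLinearMap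

theorem single_mem_beliefSimplex [DecidableEq Ω] (ω : Ω) :
    EuclideanSpace.single ω 1 ∈ beliefSimplex Ω :=
  single_mem_stdSimplex ℝ ω

theorem affineIndependent_single [DecidableEq Ω] :
    AffineIndependent ℝ fun ω : Ω => EuclideanSpace.single ω (1 : ℝ) := by
  have h := (EuclideanSpace.basisFun Ω ℝ).toBasis.linearIndependent
  rw [OrthonormalBasis.coe_toBasis, funext (EuclideanSpace.basisFun_apply Ω ℝ)] at h
  exact h.affineIndependent

theorem card_sub_one_le_finrank_vectorSpan {s U : Set (EuclideanSpace ℝ Ω)} (hU : IsOpen U)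
    {μ : EuclideanSpace ℝ Ω} (hμ : μ ∈ beliefSimplex Ω ∩ U)
    (hs : beliefSimplex Ω ∩ U ⊆ s) :
    Fintype.card Ω - 1 ≤ finrank ℝ (vectorSpan ℝ s) := by
  classical
  have : Nonempty Ω := by
    by_contra hΩ
    simpa [not_nonempty_iff.1 hΩ] using hμ.1.2
  obtain ⟨t, htU, ht0, ht1⟩ : ∃ t : ℝ,
      (∀ ω, lineMap μ (EuclideanSpace.single ω 1) t ∈ U) ∧ 0 < t ∧ t < 1 :=
    ((eventually_forall_lineMap_mem hU hμ.2 _).filter_mono nhdsWithin_le_nhds |>.and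
      (Ioo_mem_nhdsGT one_pos)).exists
  have hmem : ∀ ω, homothety μ t (EuclideanSpace.single ω 1) ∈ s := fun ω => by
    rw [homothety_eq_lineMap]
    exact hs ⟨convex_beliefSimplex.lineMap_mem hμ.1 (single_mem_beliefSimplex ω)
      ⟨ht0.le, ht1.le⟩, htU ω⟩
  exact (affineIndependent_single.map' _ (homothety_injective μ ht0.ne')
    ).le_finrank_vectorSpan_of_forall_mem (Nat.sub_add_cancel Fintype.card_pos).symm hmem

noncomputable def expectedPayoff (v : Ω → ℝ) : EuclideanSpace ℝ Ω →L[ℝ] ℝ :=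
  ∑ ω, v ω • EuclideanSpace.proj ω

@[simp]
theorem expectedPayoff_apply (v : Ω → ℝ) (μ : EuclideanSpace ℝ Ω) :
    expectedPayoff v μ = ∑ ω, μ ω * v ω := by
  simp [expectedPayoff, mul_comm]

def bestReplies (u : A → Ω → ℝ) (a : A) : Set (EuclideanSpace ℝ Ω) :=
  {μ ∈ beliefSimplex Ω | ∀ b, expectedPayoff (u b) μ ≤ expectedPayoff (u a) μ}

theorem convex_bestReplies (u : A → Ω → ℝ) (a : A) : Convex ℝ (bestReplies u a) := by
  have : bestReplies u a = beliefSimplex Ω ∩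
      ⋂ b, {μ | (expectedPayoff (u b) - expectedPayoff (u a)) μ ≤ 0} := by
    ext μ
    simp [bestReplies]
  rw [this]
  exact convex_beliefSimplex.inter
    (convex_iInter fun b => convex_halfSpace_le (LinearMap.isLinear _) 0)

theorem mem_bestReplies_of_le {u : A → Ω → ℝ} {a b : A} {μ : EuclideanSpace ℝ Ω}
    (hμ : μ ∈ bestReplies u a) (hle : expectedPayoff (u a) μ ≤ expectedPayoff (u b) μ) :
    μ ∈ bestReplies u b :=
  ⟨hμ.1, fun c => (hμ.2 c).trans hle⟩

theorem beliefSimplex_inter_subset_bestReplies (u : A → Ω → ℝ) (a : A) :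
    beliefSimplex Ω ∩ {μ | ∀ b ≠ a, expectedPayoff (u b) μ < expectedPayoff (u a) μ} ⊆
      bestReplies u a := by
  rintro μ ⟨hμ, hlt⟩
  refine ⟨hμ, fun b => ?_⟩
  rcases eq_or_ne b a with rfl | hb
  exacts [le_rfl, (hlt b hb).le]

theorem isOpen_setOf_forall_ne_expectedPayoff_lt [Finite A] (u : A → Ω → ℝ) (a : A) :
    IsOpen {μ : EuclideanSpace ℝ Ω |
      ∀ b ≠ a, expectedPayoff (u b) μ < expectedPayoff (u a) μ} := by
  simp only [Set.ofPred_forall]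
  exact isOpen_iInter_of_finite fun b => isOpen_iInter_of_finite fun _ =>
    isOpen_lt (expectedPayoff (u b)).continuous (expectedPayoff (u a)).continuous

end BestReply

/-- A nonempty lower-dimensional best-reply region is contained in the best-reply
region of some other action. -/
theorem stmt9 (N : ℕ) (A : Type*) [Fintype A] (u : A → Fin N → ℝ)
    (B : A → Set (EuclideanSpace ℝ (Fin N)))
    (hB : ∀ a, B a = {μ | (∀ j, 0 ≤ μ j) ∧ (∑ j, μ j = 1) ∧
      ∀ b, ∑ ω, μ ω * u b ω ≤ ∑ ω, μ ω * u a ω})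
    (a : A) (hne : (B a).Nonempty)
    (hdim : Module.finrank ℝ (vectorSpan ℝ (B a)) < N - 1) :
    ∃ b, b ≠ a ∧ B a ⊆ B b := by
  have hB' : B = bestReplies u := funext fun b => by
    rw [hB]
    ext μ
    simp [bestReplies, beliefSimplex, stdSimplex, and_assoc]
  subst hB'
  by_contra! hsub
  have hlt : ∀ b : {b // b ≠ a}, ∃ μ ∈ bestReplies u a,
      (expectedPayoff (u b) - expectedPayoff (u a)) μ < 0 := fun b => by
    obtain ⟨μ, hμa, hμb⟩ := Set.not_subset.1 (hsub b b.2)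
    exact ⟨μ, hμa, sub_neg.2 (lt_of_not_ge fun h => hμb (mem_bestReplies_of_le hμa h))⟩
  obtain ⟨μ, hμ, hμlt⟩ := exists_mem_forall_neg_of_convexOn hne
    (fun b : {b // b ≠ a} => ((expectedPayoff (u b) - expectedPayoff (u a)) : _ →ₗ[ℝ] ℝ
      ).convexOn (convex_bestReplies u a))
    (fun b ν hν => sub_nonpos.2 (hν.2 b)) hlt
  have := card_sub_one_le_finrank_vectorSpan (isOpen_setOf_forall_ne_expectedPayoff_lt u a)
    ⟨hμ.1, fun b hb => sub_neg.1 (hμlt ⟨b, hb⟩)⟩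
    (beliefSimplex_inter_subset_bestReplies u a)
  rw [Fintype.card_fin] at this
  omega
end

section
/- In the setting of the previous statement (finite Ω, A, receiver utility u, best-reply regions B(a) ⊂ Δ(Ω)): if B(a) is nonempty and dim(B(a)) < N − 1, then there exists an action b ≠ a with B(a) ⊆ B(b) and dim(B(b)) = N − 1. -/
/-!
Pick `μ` in the relative interior of `B a`. The payoff advantage of `a` over any `b` is an affine
function that is nonnegative on `B a`; if `μ ∈ B b` it vanishes at `μ`, hence on all of `B a`, so
`B a ⊆ B b`. It remains to find a full-dimensional region containing `μ`. The regions are closed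
and cover the simplex `Δ`, so if no full-dimensional region contains `μ`, a relative neighbourhood
of `μ` in `Δ` is covered by the affine spans of the lower-dimensional regions, each a closed proper
affine subspace of `affineSpan Δ`. A convex set whose relatively open piece is covered by finitely
many closed affine subspaces lies in one of them, contradicting properness.
-/

open Module Set Filter Topology AffineMap

theorem AffineSubspace.mem_of_lineMap_mem {k V P : Type*} [Field k] [AddCommGroup V]
    [Module k V] [AddTorsor V P] {W : AffineSubspace k P} {x y : P} {t : k}
    (hx : x ∈ W) (ht : t ≠ 0) (hxy : lineMap x y t ∈ W) : y ∈ W := by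
  have := W.vsub_mem_direction hxy hx
  rwa [lineMap_vsub_left, Submodule.smul_mem_iff _ ht,
    W.vsub_right_mem_direction_iff_mem hx] at this

theorem vectorSpan_eq_of_subset_of_subset_affineSpan {k V P : Type*} [Ring k] [AddCommGroup V]
    [Module k V] [AddTorsor V P] {s t : Set P} (hst : s ⊆ t) (hts : t ⊆ affineSpan k s) :
    vectorSpan k s = vectorSpan k t := by
  rw [← direction_affineSpan, le_antisymm (affineSpan_mono k hst) (affineSpan_le.2 hts),
    direction_affineSpan]

section ConvexAffine
variable {E ι : Type*} [NormedAddCommGroup E] [NormedSpace ℝ E]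

theorem Convex.exists_subset_of_inter_subset_biUnion_affineSubspace {C U : Set E}
    (hC : Convex ℝ C) (hU : IsOpen U) (hCU : (C ∩ U).Nonempty) {W : ι → AffineSubspace ℝ E}
    (hW : ∀ i, IsClosed (W i : Set E)) (s : Finset ι)
    (hcover : C ∩ U ⊆ ⋃ i ∈ s, (W i : Set E)) : ∃ i ∈ s, C ⊆ W i := by
  classical
  induction s using Finset.induction_on with
  | empty =>
    obtain ⟨x, hx⟩ := hCU
    simpa using hcover hx
  | insert j s _ ih =>
    by_cases hCj : C ⊆ W j
    · exact ⟨j, s.mem_insert_self j, hCj⟩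
    obtain ⟨y, hyC, hyj⟩ := not_subset.1 hCj
    suffices C ∩ U ⊆ ⋃ i ∈ s, (W i : Set E) by
      obtain ⟨i, hi, hCi⟩ := ih this
      exact ⟨i, s.mem_insert_of_mem hi, hCi⟩
    rintro x ⟨hxC, hxU⟩
    by_cases hxj : x ∈ W j
    · -- `x` is a limit of points of `C ∩ U` on the segment towards `y`, none of which lies in `W j`
      have hlim : Tendsto (lineMap x y) (𝓝[>] (0 : ℝ)) (𝓝 x) :=
        (lineMap_continuous.tendsto' 0 x (by simp)).mono_left nhdsWithin_le_nhds
      refine (s.finite_toSet.isClosed_biUnion fun i _ => hW i).mem_of_tendsto hlim ?_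
      filter_upwards [hlim.eventually (hU.mem_nhds hxU), Ioo_mem_nhdsGT (zero_lt_one' ℝ)]
        with t htU ht
      have := hcover ⟨hC.lineMap_mem hxC hyC ⟨ht.1.le, ht.2.le⟩, htU⟩
      simp only [Finset.set_biUnion_insert, mem_union] at this
      exact this.resolve_left fun h => hyj (AffineSubspace.mem_of_lineMap_mem hxj ht.1.ne' h)
    · simpa [hxj] using hcover ⟨hxC, hxU⟩

theorem exists_one_lt_lineMap_mem_of_mem_intrinsicInterior {C : Set E} {x y : E}
    (hx : x ∈ intrinsicInterior ℝ C) (hy : y ∈ C) : ∃ t : ℝ, 1 < t ∧ lineMap y x t ∈ C := by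
  obtain ⟨x', hx', rfl⟩ := mem_intrinsicInterior.1 hx
  let γ : ℝ → affineSpan ℝ C := fun t =>
    ⟨lineMap y x' t, AffineMap.lineMap_mem t (subset_affineSpan ℝ C hy) x'.2⟩
  have hγ : Continuous γ := lineMap_continuous.subtype_mk _
  have h1 : γ 1 = x' := Subtype.ext (lineMap_apply_one _ _)
  have := (hγ.tendsto 1).eventually (isOpen_interior.mem_nhds (h1 ▸ hx'))
  obtain ⟨t, ht, ht1⟩ := ((this.filter_mono nhdsWithin_le_nhds).and
    (self_mem_nhdsWithin (s := Ioi 1))).exists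
  exact ⟨t, ht1, interior_subset (s := ((↑) ⁻¹' C : Set (affineSpan ℝ C))) ht⟩

theorem AffineMap.eq_of_isMinOn_of_mem_intrinsicInterior (f : E →ᵃ[ℝ] ℝ) {C : Set E} {x y : E}
    (hx : x ∈ intrinsicInterior ℝ C) (hf : IsMinOn f C x) (hy : y ∈ C) : f y = f x := by
  obtain ⟨t, ht, hz⟩ := exists_one_lt_lineMap_mem_of_mem_intrinsicInterior hx hy
  have hfy : f x ≤ f y := hf hy
  have hfz := hf hz
  rw [mem_ofPred_eq, apply_lineMap, lineMap_apply_module', smul_eq_mul] at hfz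
  nlinarith
end ConvexAffine


section Simplex
variable {ι : Type*} [Fintype ι]

def weightedSum (w : ι → ℝ) : EuclideanSpace ℝ ι →ₗ[ℝ] ℝ where
  toFun μ := ∑ j, μ j * w j
  map_add' μ ν := by simp only [PiLp.add_apply, add_mul, Finset.sum_add_distrib]
  map_smul' c μ := by
    simp only [PiLp.smul_apply, smul_eq_mul, mul_assoc, Finset.mul_sum, RingHom.id_apply]

@[simp]
theorem weightedSum_apply (w : ι → ℝ) (μ : EuclideanSpace ℝ ι) :
    weightedSum w μ = ∑ j, μ j * w j := rfl

variable (ι) in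
def probSimplex : Set (EuclideanSpace ℝ ι) := WithLp.ofLp ⁻¹' stdSimplex ℝ ι

theorem mem_probSimplex {μ : EuclideanSpace ℝ ι} :
    μ ∈ probSimplex ι ↔ (∀ j, 0 ≤ μ j) ∧ ∑ j, μ j = 1 := Iff.rfl

variable (ι) in
theorem convex_probSimplex : Convex ℝ (probSimplex ι) :=
  (convex_stdSimplex ℝ ι).linear_preimage (WithLp.linearEquiv 2 ℝ (ι → ℝ)).toLinearMap

variable (ι) in
theorem isClosed_probSimplex : IsClosed (probSimplex ι) :=
  (isClosed_stdSimplex ℝ ι).preimage (PiLp.continuous_ofLp 2 _)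

theorem vectorSpan_probSimplex [Nonempty ι] :
    vectorSpan ℝ (probSimplex ι) = LinearMap.ker (weightedSum 1) := by
  classical
  apply le_antisymm
  · rw [vectorSpan_def, Submodule.span_le]
    rintro _ ⟨μ, hμ, ν, hν, rfl⟩
    simp [mem_probSimplex.1 hμ, mem_probSimplex.1 hν]
  · intro v hv
    let j₀ := Classical.arbitrary ι
    have he (j : ι) : EuclideanSpace.single j (1 : ℝ) ∈ probSimplex ι := by
      simp [mem_probSimplex, PiLp.single_apply, apply_ite]
    have hv' :
        v = ∑ j, v j • (EuclideanSpace.single j (1 : ℝ) -ᵥ EuclideanSpace.single j₀ 1) := by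
      ext i
      simp only [LinearMap.mem_ker, weightedSum_apply, Pi.one_apply, mul_one] at hv
      simp [Pi.single_apply, mul_sub, Finset.sum_sub_distrib, hv]
    rw [hv']
    exact Submodule.sum_mem _ fun j _ =>
      Submodule.smul_mem _ _ (vsub_mem_vectorSpan ℝ (he j) (he j₀))

theorem finrank_vectorSpan_probSimplex [Nonempty ι] :
    finrank ℝ (vectorSpan ℝ (probSimplex ι)) = Fintype.card ι - 1 := by
  classical
  have hne : weightedSum (1 : ι → ℝ) ≠ 0 := fun h => by
    simpa [PiLp.single_apply] using
      LinearMap.congr_fun h (EuclideanSpace.single (Classical.arbitrary ι) 1)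
  have := Dual.finrank_ker_add_one_of_ne_zero hne
  rw [finrank_euclideanSpace] at this
  rw [vectorSpan_probSimplex]
  omega

end Simplex

section BestReply
variable {ι A : Type*} [Fintype ι] (u : A → ι → ℝ)

def bestReplyRegion (a : A) : Set (EuclideanSpace ℝ ι) :=
  {μ | (∀ j, 0 ≤ μ j) ∧ (∑ j, μ j = 1) ∧ ∀ b, ∑ ω, μ ω * u b ω ≤ ∑ ω, μ ω * u a ω}

theorem bestReplyRegion_eq (a : A) :
    bestReplyRegion u a =
      probSimplex ι ∩ ⋂ b, (weightedSum (u b) - weightedSum (u a)) ⁻¹' Iic 0 := by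
  ext μ
  simp [bestReplyRegion, mem_probSimplex, and_assoc]

theorem bestReplyRegion_subset_probSimplex (a : A) : bestReplyRegion u a ⊆ probSimplex ι :=
  fun _ hμ => ⟨hμ.1, hμ.2.1⟩

theorem convex_bestReplyRegion (a : A) : Convex ℝ (bestReplyRegion u a) := by
  rw [bestReplyRegion_eq]
  exact (convex_probSimplex ι).inter <| convex_iInter fun b => (convex_Iic 0).linear_preimage _

theorem isClosed_bestReplyRegion (a : A) : IsClosed (bestReplyRegion u a) := by
  rw [bestReplyRegion_eq]
  exact (isClosed_probSimplex ι).inter <| isClosed_iInter fun b =>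
    isClosed_Iic.preimage (LinearMap.continuous_of_finiteDimensional _)

theorem exists_mem_bestReplyRegion [Finite A] [Nonempty A] {μ : EuclideanSpace ℝ ι}
    (hμ : μ ∈ probSimplex ι) : ∃ a, μ ∈ bestReplyRegion u a :=
  let ⟨a, ha⟩ := Finite.exists_max fun b => weightedSum (u b) μ
  ⟨a, hμ.1, hμ.2, ha⟩

theorem bestReplyRegion_subset_of_mem_intrinsicInterior {a b : A} {μ : EuclideanSpace ℝ ι}
    (hμa : μ ∈ intrinsicInterior ℝ (bestReplyRegion u a)) (hμb : μ ∈ bestReplyRegion u b) :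
    bestReplyRegion u a ⊆ bestReplyRegion u b := by
  let f := (weightedSum (u a) - weightedSum (u b)).toAffineMap
  have hf : ∀ ν ∈ bestReplyRegion u a, 0 ≤ f ν := fun ν hν => by
    simpa [f] using hν.2.2 b
  have hfμ : f μ ≤ 0 := by simpa [f] using hμb.2.2 a
  intro ν hν
  have hfν : f ν ≤ 0 :=
    (f.eq_of_isMinOn_of_mem_intrinsicInterior hμa (fun ν hν => hfμ.trans (hf ν hν)) hν).trans_le hfμ
  exact ⟨hν.1, hν.2.1, fun c => (hν.2.2 c).trans (by simpa [f] using hfν)⟩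

theorem exists_mem_bestReplyRegion_and_probSimplex_subset_affineSpan [Fintype A] [Nonempty A]
    {μ : EuclideanSpace ℝ ι} (hμ : μ ∈ probSimplex ι) :
    ∃ b, μ ∈ bestReplyRegion u b ∧ probSimplex ι ⊆ affineSpan ℝ (bestReplyRegion u b) := by
  classical
  by_contra! h
  set U := ⋂ b ∈ {b | probSimplex ι ⊆ affineSpan ℝ (bestReplyRegion u b)}, (bestReplyRegion u b)ᶜ
  have hU : IsOpen U :=
    (toFinite _).isOpen_biInter fun b _ => (isClosed_bestReplyRegion u b).isOpen_compl
  have hμU : μ ∈ U := mem_iInter₂.2 fun b hb hμb => h b hμb hb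
  have hcover : probSimplex ι ∩ U ⊆
      ⋃ b ∈ ({b | ¬ probSimplex ι ⊆ affineSpan ℝ (bestReplyRegion u b)} : Finset A),
        (affineSpan ℝ (bestReplyRegion u b) : Set (EuclideanSpace ℝ ι)) := by
    rintro ν ⟨hν, hνU⟩
    obtain ⟨c, hc⟩ := exists_mem_bestReplyRegion u hν
    exact mem_biUnion
      (Finset.mem_filter.2 ⟨Finset.mem_univ c, fun hΔc => mem_iInter₂.1 hνU c hΔc hc⟩)
      (subset_affineSpan ℝ _ hc)
  obtain ⟨b, hb, hΔb⟩ :=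
    (convex_probSimplex ι).exists_subset_of_inter_subset_biUnion_affineSubspace hU ⟨μ, hμ, hμU⟩
      (fun b => (affineSpan ℝ (bestReplyRegion u b)).closed_of_finiteDimensional) _ hcover
  exact (Finset.mem_filter.1 hb).2 hΔb

end BestReply

/-- A nonempty lower-dimensional best-reply region is contained in a full-dimensional
best-reply region of some other action. -/
theorem stmt10 (N : ℕ) (A : Type*) [Fintype A] (u : A → Fin N → ℝ)
    (B : A → Set (EuclideanSpace ℝ (Fin N)))
    (hB : ∀ a, B a = {μ | (∀ j, 0 ≤ μ j) ∧ (∑ j, μ j = 1) ∧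
      ∀ b, ∑ ω, μ ω * u b ω ≤ ∑ ω, μ ω * u a ω})
    (a : A) (hne : (B a).Nonempty)
    (hdim : Module.finrank ℝ (vectorSpan ℝ (B a)) < N - 1) :
    ∃ b, b ≠ a ∧ B a ⊆ B b ∧ Module.finrank ℝ (vectorSpan ℝ (B b)) = N - 1 := by
  obtain rfl : B = bestReplyRegion u := funext hB
  have : NeZero N := ⟨by omega⟩
  have : Nonempty A := ⟨a⟩
  obtain ⟨μ, hμ⟩ := hne.intrinsicInterior (convex_bestReplyRegion u a)
  obtain ⟨b, hμb, hΔb⟩ := exists_mem_bestReplyRegion_and_probSimplex_subset_affineSpan u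
    (bestReplyRegion_subset_probSimplex u a (intrinsicInterior_subset hμ))
  have hb : finrank ℝ (vectorSpan ℝ (bestReplyRegion u b)) = N - 1 := by
    rw [vectorSpan_eq_of_subset_of_subset_affineSpan (bestReplyRegion_subset_probSimplex u b) hΔb,
      finrank_vectorSpan_probSimplex, Fintype.card_fin]
  refine ⟨b, ?_, bestReplyRegion_subset_of_mem_intrinsicInterior u hμ hμb, hb⟩
  rintro rfl
  exact hdim.ne hb
end

section
/- Let {μᵢ}_{i≤I} ⊂ Δ(Ω) and suppose two weight vectors {αᵢ} and {βᵢ} (each nonnegative, summing to 1) both satisfy ∑ᵢ αᵢμᵢ = ∑ᵢ βᵢμᵢ = μ₀, with α ≠ β. Let ρ = maxᵢ (βᵢ/αᵢ) over i with αᵢ > 0 (assume αᵢ > 0 for all i). Then ρ ≥ 1, the weights α*ᵢ = (αᵢ − βᵢ/ρ)/(1 − 1/ρ) are nonnegative and sum to 1 with ∑ᵢ α*ᵢ μᵢ = μ₀, and at least one α*ᵢ equals 0. Moreover the original splitting decomposes as a convex combination: α = (1 − 1/ρ)·α* + (1/ρ)·β. -/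
/-!
If `β ≠ α` are two splittings of the same prior, some `β i` exceeds `α i`, so the largest
likelihood ratio `ρ = max βᵢ/αᵢ` exceeds `1`. Removing the share `1/ρ` of `β` from `α` keeps every
weight nonnegative, kills the weight where the maximum is attained, and preserves the barycentre
because both `α` and `β` average to `μ₀`; renormalising by `1 - 1/ρ` gives the splitting `α*`.
-/

open Finset

section Weights

variable {ι : Type*}

lemma exists_lt_of_sum_eq_of_ne [Fintype ι] {M : Type*} [AddCommMonoid M] [LinearOrder M]
    [IsOrderedCancelAddMonoid M] {α β : ι → M} (hsum : ∑ i, α i = ∑ i, β i) (hne : α ≠ β) :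
    ∃ i, α i < β i := by
  by_contra! hle
  refine hne (funext fun i => ?_)
  exact ((sum_eq_sum_iff_of_le fun i _ => hle i).1 hsum.symm i (mem_univ i)).symm

variable {𝕜 : Type*} [Field 𝕜]

def residualWeights (α β : ι → 𝕜) (ρ : 𝕜) (i : ι) : 𝕜 := (α i - β i / ρ) / (1 - 1 / ρ)

lemma residualWeights_sum_smul [Fintype ι] {E : Type*} [AddCommGroup E] [Module 𝕜 E]
    {α β : ι → 𝕜} {ρ : 𝕜} (hρ : 1 - 1 / ρ ≠ 0) {μ : ι → E} {μ₀ : E} (hα : ∑ i, α i • μ i = μ₀)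
    (hβ : ∑ i, β i • μ i = μ₀) :
    ∑ i, residualWeights α β ρ i • μ i = μ₀ := by
  calc ∑ i, residualWeights α β ρ i • μ i
      = (1 - 1 / ρ)⁻¹ • (∑ i, α i • μ i - (1 / ρ) • ∑ i, β i • μ i) := by
        rw [smul_sum, ← sum_sub_distrib, smul_sum]
        refine sum_congr rfl fun i _ => ?_
        rw [residualWeights]
        module
    _ = (1 - 1 / ρ)⁻¹ • ((1 - 1 / ρ) • μ₀) := by rw [hα, hβ, sub_smul, one_smul]
    _ = μ₀ := inv_smul_smul₀ hρ μ₀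

lemma residualWeights_sum [Fintype ι] {α β : ι → 𝕜} {ρ : 𝕜} (hρ : 1 - 1 / ρ ≠ 0)
    (hα : ∑ i, α i = 1) (hβ : ∑ i, β i = 1) :
    ∑ i, residualWeights α β ρ i = 1 := by
  -- the total weight is the barycentre of the constant family `1`
  simpa using residualWeights_sum_smul hρ (μ := fun _ => (1 : 𝕜)) (by simpa using hα)
    (by simpa using hβ)

lemma residualWeights_eq_zero {α β : ι → 𝕜} {ρ : 𝕜} {i : ι} (hρ : ρ ≠ 0) (hi : β i = ρ * α i) :
    residualWeights α β ρ i = 0 := by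
  rw [residualWeights, hi, mul_div_cancel_left₀ _ hρ, sub_self, zero_div]

lemma residualWeights_convex_combination (α β : ι → 𝕜) {ρ : 𝕜} (hρ : 1 - 1 / ρ ≠ 0) (i : ι) :
    (1 - 1 / ρ) * residualWeights α β ρ i + (1 / ρ) * β i = α i := by
  rw [residualWeights, mul_div_cancel₀ _ hρ]
  ring

variable [LinearOrder 𝕜] [IsStrictOrderedRing 𝕜]

lemma one_lt_of_forall_le_mul [Fintype ι] {α β : ι → 𝕜} {ρ : 𝕜} (hα : ∀ i, 0 < α i)
    (hsum : ∑ i, α i = ∑ i, β i) (hne : α ≠ β) (hle : ∀ i, β i ≤ ρ * α i) : 1 < ρ := by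
  obtain ⟨i, hi⟩ := exists_lt_of_sum_eq_of_ne hsum hne
  exact lt_of_mul_lt_mul_right (by simpa using hi.trans_le (hle i)) (hα i).le

lemma residualWeights_nonneg {α β : ι → 𝕜} {ρ : 𝕜} (hρ : 1 < ρ) {i : ι} (hi : β i ≤ ρ * α i) :
    0 ≤ residualWeights α β ρ i := by
  have hρ₀ : 0 < ρ := zero_lt_one.trans hρ
  refine div_nonneg (sub_nonneg.2 ((div_le_iff₀' hρ₀).2 hi)) (sub_nonneg.2 ?_)
  exact (div_le_one hρ₀).2 hρ.le

end Weights

theorem stmt13_general (N I : ℕ) (μ₀ : EuclideanSpace ℝ (Fin N))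
    (μ : Fin I → EuclideanSpace ℝ (Fin N))
    (α β : Fin I → ℝ) (hαpos : ∀ i, 0 < α i)
    (hαsum : ∑ i, α i = 1) (hβsum : ∑ i, β i = 1)
    (hαavg : ∑ i, α i • μ i = μ₀) (hβavg : ∑ i, β i • μ i = μ₀)
    (hne : α ≠ β)
    (ρ : ℝ) (hρub : ∀ i, β i / α i ≤ ρ) (hρmem : ∃ i, β i / α i = ρ) :
    1 ≤ ρ ∧
    (∀ i, 0 ≤ (α i - β i / ρ) / (1 - 1 / ρ)) ∧
    (∑ i, (α i - β i / ρ) / (1 - 1 / ρ)) = 1 ∧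
    (∑ i, ((α i - β i / ρ) / (1 - 1 / ρ)) • μ i) = μ₀ ∧
    (∃ i, (α i - β i / ρ) / (1 - 1 / ρ) = 0) ∧
    (∀ i, α i = (1 - 1 / ρ) * ((α i - β i / ρ) / (1 - 1 / ρ)) + (1 / ρ) * β i) := by
  have hle : ∀ i, β i ≤ ρ * α i := fun i => (div_le_iff₀ (hαpos i)).1 (hρub i)
  have hρ : 1 < ρ := one_lt_of_forall_le_mul hαpos (hαsum.trans hβsum.symm) hne hle
  have hc : 1 - 1 / ρ ≠ 0 := sub_ne_zero.2 (by simpa using hρ.ne')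
  obtain ⟨i₀, hi₀⟩ := hρmem
  refine ⟨hρ.le, fun i => residualWeights_nonneg hρ (hle i), residualWeights_sum hc hαsum hβsum,
    residualWeights_sum_smul hc hαavg hβavg,
    ⟨i₀, residualWeights_eq_zero (zero_lt_one.trans hρ).ne' ?_⟩,
    fun i => (residualWeights_convex_combination α β hc i).symm⟩
  rw [← hi₀, div_mul_cancel₀ _ (hαpos i₀).ne']

/-- Two distinct weight systems over the same posteriors averaging to the same prior allow a
decomposition of the first as a convex combination of the second and a splitting with
strictly smaller support. -/
theorem stmt13 (N I : ℕ) (μ₀ : EuclideanSpace ℝ (Fin N))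
    (μ : Fin I → EuclideanSpace ℝ (Fin N))
    (hμΔ : ∀ i, (∀ j, 0 ≤ μ i j) ∧ ∑ j, μ i j = 1)
    (α β : Fin I → ℝ) (hαpos : ∀ i, 0 < α i) (hβ : ∀ i, 0 ≤ β i)
    (hαsum : ∑ i, α i = 1) (hβsum : ∑ i, β i = 1)
    (hαavg : ∑ i, α i • μ i = μ₀) (hβavg : ∑ i, β i • μ i = μ₀)
    (hne : α ≠ β)
    (ρ : ℝ) (hρub : ∀ i, β i / α i ≤ ρ) (hρmem : ∃ i, β i / α i = ρ) :
    1 ≤ ρ ∧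
    (∀ i, 0 ≤ (α i - β i / ρ) / (1 - 1 / ρ)) ∧
    (∑ i, (α i - β i / ρ) / (1 - 1 / ρ)) = 1 ∧
    (∑ i, ((α i - β i / ρ) / (1 - 1 / ρ)) • μ i) = μ₀ ∧
    (∃ i, (α i - β i / ρ) / (1 - 1 / ρ) = 0) ∧
    (∀ i, α i = (1 - 1 / ρ) * ((α i - β i / ρ) / (1 - 1 / ρ)) + (1 / ρ) * β i) :=
  stmt13_general N I μ₀ μ α β hαpos hαsum hβsum hαavg hβavg hne ρ hρub hρmem
end

section
/- Let D = {x ∈ ℝⁿ : x(j) ≥ 0, ∑ⱼ x(j) ≤ 1}, B = {x ∈ D : ⟨αᵢ, x⟩ ≤ βᵢ, i ≤ m} nonempty, and Aff(B, δ) = {x ∈ D : ⟨αᵢ, x⟩ ≤ βᵢ + δ, i ≤ m}. Then for every γ > 0 there exists δ₀ > 0 such that for all 0 < δ < δ₀, every point of Aff(B, +δ) is within Euclidean distance γ of some point of B. -/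
open Filter Topology

/-- Stability of expanded systems (outer semicontinuity): points of the `δ`-relaxed
feasible region are within `γ` of the original region, for `δ` small. -/
theorem stmt15 (n m : ℕ) (α : Fin m → EuclideanSpace ℝ (Fin n)) (β : Fin m → ℝ)
    (D : Set (EuclideanSpace ℝ (Fin n)))
    (hD : D = {x | (∀ j, 0 ≤ x j) ∧ ∑ j, x j ≤ 1})
    (hne : {x ∈ D | ∀ i, ∑ j, α i j * x j ≤ β i}.Nonempty) :
    ∀ γ > (0:ℝ), ∃ δ₀ > (0:ℝ), ∀ δ : ℝ, 0 < δ → δ < δ₀ →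
      ∀ x ∈ {x ∈ D | ∀ i, ∑ j, α i j * x j ≤ β i + δ},
        ∃ y ∈ {x ∈ D | ∀ i, ∑ j, α i j * x j ≤ β i}, ‖x - y‖ ≤ γ := by
  intro γ hγ
  by_contra hcon
  push_neg at hcon
  have cont_apply : ∀ j : Fin n, Continuous (fun x : EuclideanSpace ℝ (Fin n) => x j) :=
    fun j => (EuclideanSpace.proj j).continuous
  -- extract a sequence of bad points
  have key : ∀ k : ℕ, ∃ x : EuclideanSpace ℝ (Fin n),
      x ∈ D ∧ (∀ i, ∑ j, α i j * x j ≤ β i + 1/(k+1)) ∧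
      (∀ y, y ∈ D → (∀ i, ∑ j, α i j * y j ≤ β i) → γ < ‖x - y‖) := by
    intro k
    obtain ⟨δ, hδ0, hδlt, x, hx, hfar⟩ := hcon (1/(k+1)) (by positivity)
    refine ⟨x, hx.1, fun i => (hx.2 i).trans (by linarith), fun y hy1 hy2 => ?_⟩
    exact hfar y ⟨hy1, hy2⟩
  choose x hxD hxle hxfar using key
  -- D is compact
  have hDclosed : IsClosed D := by
    rw [hD]
    have heq : {x : EuclideanSpace ℝ (Fin n) | (∀ j, 0 ≤ x j) ∧ ∑ j, x j ≤ 1}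
        = (⋂ j, {x : EuclideanSpace ℝ (Fin n) | 0 ≤ x j})
          ∩ {x : EuclideanSpace ℝ (Fin n) | ∑ j, x j ≤ 1} := by
      ext z; simp [Set.mem_iInter]
    rw [heq]
    exact (isClosed_iInter fun j => isClosed_le continuous_const (cont_apply j)).inter
      (isClosed_le (continuous_finset_sum _ fun j _ => cont_apply j) continuous_const)
  have hDsub : D ⊆ Metric.closedBall 0 1 := by
    intro z hz
    rw [hD] at hz
    obtain ⟨hz1, hz2⟩ := hz
    have hle1 : ∀ j, z j ≤ 1 := by
      intro j
      have : z j ≤ ∑ j', z j' :=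
        Finset.single_le_sum (fun j' _ => hz1 j') (Finset.mem_univ j)
      linarith
    rw [Metric.mem_closedBall, dist_zero_right, EuclideanSpace.norm_eq]
    have hsum : ∑ j, ‖z j‖ ^ 2 ≤ 1 := by
      calc ∑ j, ‖z j‖ ^ 2 ≤ ∑ j, z j := by
            apply Finset.sum_le_sum
            intro j _
            rw [Real.norm_eq_abs, abs_of_nonneg (hz1 j), sq]
            nlinarith [hz1 j, hle1 j]
        _ ≤ 1 := hz2
    calc √(∑ j, ‖z j‖ ^ 2) ≤ √1 := Real.sqrt_le_sqrt hsum
      _ = 1 := Real.sqrt_one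
  have hDcomp : IsCompact D :=
    (isCompact_closedBall (0 : EuclideanSpace ℝ (Fin n)) 1).of_isClosed_subset hDclosed hDsub
  obtain ⟨a, haD, φ, hφ, hφtend⟩ := hDcomp.tendsto_subseq hxD
  -- the limit point lies in B
  have haB : ∀ i, ∑ j, α i j * a j ≤ β i := by
    intro i
    have hcont : Continuous fun z : EuclideanSpace ℝ (Fin n) => ∑ j, α i j * z j :=
      continuous_finset_sum _ fun j _ => continuous_const.mul (cont_apply j)
    have h1 : Tendsto (fun k => ∑ j, α i j * x (φ k) j) atTop (𝓝 (∑ j, α i j * a j)) :=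
      (hcont.continuousAt.tendsto).comp hφtend
    have h2 : Tendsto (fun k : ℕ => β i + 1/(φ k + 1)) atTop (𝓝 (β i)) := by
      have : Tendsto (fun k : ℕ => (1:ℝ)/(φ k + 1)) atTop (𝓝 0) :=
        tendsto_one_div_add_atTop_nhds_zero_nat.comp hφ.tendsto_atTop
      simpa using tendsto_const_nhds.add this
    exact le_of_tendsto_of_tendsto' h1 h2 fun k => hxle (φ k) i
  -- but x (φ k) → a while staying γ-far from a: contradiction
  have hnorm : Tendsto (fun k => ‖x (φ k) - a‖) atTop (𝓝 0) := by
    have := tendsto_iff_norm_sub_tendsto_zero.mp hφtend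
    simpa [Function.comp] using this
  obtain ⟨k, hk⟩ := (hnorm.eventually (eventually_lt_nhds hγ)).exists
  exact absurd (hxfar (φ k) a haD haB) (not_lt.mpr hk.le)
end
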